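/- For any program P over atoms U, P is super-coherent if and only if P is uniformly equivalent to the empty program under projection to the empty alphabet with context alphabet U, i.e., for every F ⊆ U, { I ∩ ∅ : I ∈ AS(P ∪ F) } = { I ∩ ∅ : I ∈ AS(∅ ∪ F) }. -/

import Mathlib

/-! Only the nonemptiness of the answer sets survives projection to the empty alphabet, and the
empty program extended by `F` always has the answer set `F`; so the equivalence says exactly that
`P ∪ F` has an answer set for every `F ⊆ U`. That suffices for super-coherence: the rules of `P`
only see atoms of `U`, so adding the facts `F \ U` to an answer set `M` of `P ∪ (F ∩ U)` yields an
answer set of `P ∪ F`. -/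

structure Rule (A : Type) where
  head : Set A
  pos : Set A
  neg : Set A

abbrev Program (A : Type) := Set (Rule A)

def satRule {A : Type} (I : Set A) (r : Rule A) : Prop :=
  r.pos ⊆ I → r.neg ∩ I = ∅ → (r.head ∩ I).Nonempty

def isModel {A : Type} (P : Program A) (I : Set A) : Prop := ∀ r ∈ P, satRule I r

def reduct {A : Type} (P : Program A) (K : Set A) : Program A :=
  {r' | ∃ r ∈ P, r.neg ∩ K = ∅ ∧ r' = ⟨r.head, r.pos, ∅⟩}

def isAnswerSet {A : Type} (P : Program A) (M : Set A) : Prop :=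
  isModel (reduct P M) M ∧ ∀ N ⊆ M, isModel (reduct P M) N → N = M

def factsOf {A : Type} (F : Set A) : Program A := {r | ∃ a ∈ F, r = ⟨{a}, ∅, ∅⟩}

def superCoherent {A : Type} (P : Program A) : Prop :=
  ∀ F : Set A, ∃ M, isAnswerSet (P ∪ factsOf F) M

def atomsOf {A : Type} (P : Program A) : Set A :=
  ⋃ r ∈ P, (r.head ∪ r.pos ∪ r.neg)

section
variable {A : Type}

lemma reduct_union (P Q : Program A) (K : Set A) :
    reduct (P ∪ Q) K = reduct P K ∪ reduct Q K := by
  ext r'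
  simp only [reduct, Set.mem_ofPred_eq, Set.mem_union]
  constructor
  · rintro ⟨r, hr | hr, hneg, rfl⟩
    exacts [Or.inl ⟨r, hr, hneg, rfl⟩, Or.inr ⟨r, hr, hneg, rfl⟩]
  · rintro (⟨r, hr, hneg, rfl⟩ | ⟨r, hr, hneg, rfl⟩)
    exacts [⟨r, Or.inl hr, hneg, rfl⟩, ⟨r, Or.inr hr, hneg, rfl⟩]

lemma reduct_factsOf (F K : Set A) : reduct (factsOf F) K = factsOf F := by
  ext r'
  simp only [reduct, factsOf, Set.mem_ofPred_eq]
  constructor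
  · rintro ⟨_, ⟨a, ha, rfl⟩, -, rfl⟩
    exact ⟨a, ha, rfl⟩
  · rintro ⟨a, ha, rfl⟩
    exact ⟨_, ⟨a, ha, rfl⟩, Set.empty_inter K, rfl⟩

lemma isModel_union {P Q : Program A} {I : Set A} :
    isModel (P ∪ Q) I ↔ isModel P I ∧ isModel Q I := by
  simp only [isModel, Set.mem_union, or_imp, forall_and]

lemma satRule_fact_iff {a : A} {I : Set A} : satRule I ⟨{a}, ∅, ∅⟩ ↔ a ∈ I := by
  simp [satRule, Set.singleton_inter_nonempty]

lemma isModel_factsOf_iff {F I : Set A} : isModel (factsOf F) I ↔ F ⊆ I := by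
  constructor
  · exact fun h a ha => satRule_fact_iff.1 (h _ ⟨a, ha, rfl⟩)
  · rintro h _ ⟨a, ha, rfl⟩
    exact satRule_fact_iff.2 (h ha)

lemma isAnswerSet_union_factsOf_iff {P : Program A} {F M : Set A} :
    isAnswerSet (P ∪ factsOf F) M ↔
      F ⊆ M ∧ isModel (reduct P M) M ∧
        ∀ N ⊆ M, F ⊆ N → isModel (reduct P M) N → N = M := by
  simp only [isAnswerSet, reduct_union, reduct_factsOf, isModel_union, isModel_factsOf_iff]
  constructor
  · rintro ⟨⟨hmod, hF⟩, hmin⟩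
    exact ⟨hF, hmod, fun N hN hFN hmodN => hmin N hN ⟨hmodN, hFN⟩⟩
  · rintro ⟨hF, hmod, hmin⟩
    exact ⟨⟨hmod, hF⟩, fun N hN ⟨hmodN, hFN⟩ => hmin N hN hFN hmodN⟩

lemma isAnswerSet_factsOf (F : Set A) : isAnswerSet (factsOf F) F := by
  simp only [isAnswerSet, reduct_factsOf, isModel_factsOf_iff]
  exact ⟨subset_rfl, fun _ hN hFN => hN.antisymm hFN⟩

lemma subset_atomsOf {P : Program A} {r : Rule A} (hr : r ∈ P) :
    r.head ∪ r.pos ∪ r.neg ⊆ atomsOf P :=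
  Set.subset_biUnion_of_mem (u := fun r : Rule A => r.head ∪ r.pos ∪ r.neg) hr

lemma atomsOf_reduct_subset (P : Program A) (K : Set A) : atomsOf (reduct P K) ⊆ atomsOf P := by
  refine Set.iUnion₂_subset ?_
  rintro _ ⟨r, hr, -, rfl⟩
  refine subset_trans ?_ (subset_atomsOf hr)
  simp only [Set.union_empty]
  exact Set.subset_union_left

lemma satRule_inter_iff {U I : Set A} {r : Rule A} (hr : r.head ∪ r.pos ∪ r.neg ⊆ U) :
    satRule (I ∩ U) r ↔ satRule I r := by
  simp only [Set.union_subset_iff] at hr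
  obtain ⟨⟨hhead, hpos⟩, hneg⟩ := hr
  have hinter {S : Set A} (hS : S ⊆ U) : S ∩ (I ∩ U) = S ∩ I := by
    rw [Set.inter_comm I U, ← Set.inter_assoc, Set.inter_eq_left.2 hS]
  simp only [satRule, Set.subset_inter_iff, hpos, and_true, hinter hneg, hinter hhead]

lemma isModel_inter_iff {P : Program A} {U I : Set A} (hU : atomsOf P ⊆ U) :
    isModel P (I ∩ U) ↔ isModel P I :=
  forall₂_congr fun _ hr => satRule_inter_iff ((subset_atomsOf hr).trans hU)

lemma reduct_union_of_disjoint {P : Program A} {U K G : Set A} (hU : atomsOf P ⊆ U)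
    (hG : Disjoint G U) : reduct P (K ∪ G) = reduct P K := by
  have hneg : ∀ r ∈ P, r.neg ∩ (K ∪ G) = r.neg ∩ K := fun r hr => by
    have hnegU : r.neg ⊆ U := (Set.subset_union_right.trans (subset_atomsOf hr)).trans hU
    rw [Set.inter_union_distrib_left,
      (hG.symm.mono_left hnegU).inter_eq, Set.union_empty]
  ext r'
  simp only [reduct, Set.mem_ofPred_eq]
  exact exists_congr fun r => and_congr_right fun hr => by rw [hneg r hr]

lemma isAnswerSet_union_factsOf_diff {P : Program A} {U F M : Set A} (hU : atomsOf P ⊆ U)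
    (hM : isAnswerSet (P ∪ factsOf (F ∩ U)) M) :
    isAnswerSet (P ∪ factsOf F) (M ∪ F \ U) := by
  obtain ⟨hFM, hmod, hmin⟩ := isAnswerSet_union_factsOf_iff.1 hM
  have hred : reduct P (M ∪ F \ U) = reduct P M :=
    reduct_union_of_disjoint hU Set.disjoint_sdiff_left
  have hUred : atomsOf (reduct P M) ⊆ U := (atomsOf_reduct_subset P M).trans hU
  have hinter : (M ∪ F \ U) ∩ U = M ∩ U := by
    rw [Set.union_inter_distrib_right, Set.sdiff_inter_self, Set.union_empty]
  refine isAnswerSet_union_factsOf_iff.2 ⟨?_, ?_, ?_⟩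
  · intro a ha
    by_cases haU : a ∈ U
    exacts [Or.inl (hFM ⟨ha, haU⟩), Or.inr ⟨ha, haU⟩]
  · rw [hred, ← isModel_inter_iff hUred, hinter, isModel_inter_iff hUred]
    exact hmod
  · intro N hN hFN hmodN
    rw [hred] at hmodN
    -- `N ∩ M` agrees with `N` on `U`, so it is a model of the reduct inside `M`.
    have hNU : N ∩ M ∩ U = N ∩ U := by
      refine subset_antisymm (Set.inter_subset_inter_left _ Set.inter_subset_left) ?_
      rintro x ⟨hxN, hxU⟩
      exact ⟨⟨hxN, (hN hxN).resolve_right fun hx => hx.2 hxU⟩, hxU⟩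
    have hNM : N ∩ M = M := by
      refine hmin _ Set.inter_subset_right (Set.subset_inter (fun a ha => hFN ha.1) hFM) ?_
      rwa [← isModel_inter_iff hUred, hNU, isModel_inter_iff hUred]
    refine hN.antisymm (Set.union_subset ?_ (Set.sdiff_subset.trans hFN))
    exact hNM ▸ Set.inter_subset_left

theorem superCoherent_iff_forall_subset {P : Program A} {U : Set A} (hU : atomsOf P ⊆ U) :
    superCoherent P ↔ ∀ F ⊆ U, ∃ M, isAnswerSet (P ∪ factsOf F) M := by
  refine ⟨fun h F _ => h F, fun h F => ?_⟩
  obtain ⟨M, hM⟩ := h (F ∩ U) Set.inter_subset_right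
  exact ⟨_, isAnswerSet_union_factsOf_diff hU hM⟩

lemma setOf_inter_empty_eq_iff (p q : Set A → Prop) :
    {s : Set A | ∃ I, p I ∧ s = I ∩ ∅} = {s : Set A | ∃ I, q I ∧ s = I ∩ ∅} ↔
      ((∃ I, p I) ↔ ∃ I, q I) := by
  simp only [Set.inter_empty, Set.ext_iff, Set.mem_ofPred_eq]
  constructor
  · intro h
    simpa using h ∅
  · intro h s
    simp only [exists_and_right, h]

end

/-- P is super-coherent iff P is uniformly equivalent to the empty program under
projection to the empty alphabet, with context alphabet U ⊇ At(P). -/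
theorem superCoherent_iff_uniform_equiv_proj {A : Type} (P : Program A) (U : Set A)
    (hU : atomsOf P ⊆ U) :
    superCoherent P ↔ ∀ F ⊆ U,
      {s : Set A | ∃ I, isAnswerSet (P ∪ factsOf F) I ∧ s = I ∩ (∅ : Set A)} =
      {s : Set A | ∃ I, isAnswerSet ((∅ : Program A) ∪ factsOf F) I ∧ s = I ∩ (∅ : Set A)} := by
  have hempty (F : Set A) : ∃ I, isAnswerSet ((∅ : Program A) ∪ factsOf F) I :=
    ⟨F, (Set.empty_union _).symm ▸ isAnswerSet_factsOf F⟩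
  simp only [setOf_inter_empty_eq_iff, hempty, iff_true]
  exact superCoherent_iff_forall_subset hU
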